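/- arXiv:math/0703408 — 2 statements merged into one kernel-verified Lean document; each statement's English description precedes it below -/
import Mathlib

section
/- Let μ and ν be Borel probability measures on ℝ supported on [0,∞) with ν ≠ δ₀, and let z ∈ ℂ⁺. Then z·G_ν(z) − 1 ≠ 0, (1−x)·z·G_ν(z) + x ≠ 0 for all x ≥ 0, and ∫_{[0,∞)} G_ν(z)/((1−x)·z·G_ν(z)+x) dμ(x) = [G_ν(z)/(z·G_ν(z)−1)] · G_μ(z·G_ν(z)/(z·G_ν(z)−1)). (This is the Cauchy-transform identity showing that the distribution of √X Y √X for monotonically independent X−1, Y with distributions μ, ν is the multiplicative monotone convolution μ ⟳ ν, characterized by K_{μ⟳ν} = K_μ ∘ K_ν.) -/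
open MeasureTheory

/-- The Cauchy transform `G_ρ(z) = ∫ 1/(z−t) dρ(t)` of a measure on `ℝ`. -/
noncomputable def cauchyTransform (ρ : Measure ℝ) (z : ℂ) : ℂ := ∫ t, (z - (t : ℂ))⁻¹ ∂ρ

/-!
Everything rests on `Im (z G_ν(z)) < 0`: since `z / (z - t) = 1 + t / (z - t)`, one has
`Im (z G_ν(z)) = -Im z ∫ t / |z - t|² dν(t)`, and this integral is positive because `ν` lives on
`[0,∞)` without being `δ₀`. Hence `z G_ν(z) ≠ 1`, and `(1 - x) z G_ν(z) + x` is nonzero: its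
imaginary part `(1 - x) Im (z G_ν(z))` vanishes only at `x = 1`, where it equals `1`. The identity is
pointwise algebra in `x`: with `w = z G / (z G - 1)`, `w - x = ((1 - x) z G + x) / (z G - 1)`.
-/

open Complex Set

lemma MeasureTheory.Measure.eq_dirac_of_ae_eq {α : Type*} [MeasurableSpace α] {ρ : Measure α}
    [IsProbabilityMeasure ρ] {a : α} (h : ∀ᵐ t ∂ρ, t = a) : ρ = Measure.dirac a := by
  simpa using (ProbabilityTheory.hasLaw_dirac_of_ae_eq (X := id) h).map_eq

lemma ae_nonneg_of_measure_Iio_eq_zero {ρ : Measure ℝ} (hρ : ρ (Iio 0) = 0) :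
    ∀ᵐ t ∂ρ, 0 ≤ t := by
  rw [ae_iff]
  simp only [not_le]
  exact hρ

section CauchyTransform

variable {ρ : Measure ℝ} {z : ℂ}

lemma im_mul_inv_sub_ofReal (z : ℂ) (t : ℝ) :
    (z * (z - t)⁻¹).im = -(t * z.im / normSq (z - t)) := by
  simp only [mul_im, inv_re, inv_im, sub_re, sub_im, ofReal_re, ofReal_im, sub_zero]
  ring

lemma integrable_inv_sub_ofReal [IsFiniteMeasure ρ] (hz : z.im ≠ 0) :
    Integrable (fun t : ℝ => (z - t)⁻¹) ρ := by
  refine .of_bound (by fun_prop) |z.im|⁻¹ (.of_forall fun t => ?_)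
  have him : |z.im| ≤ ‖z - t‖ := by simpa using abs_im_le_norm (z - t)
  rw [norm_inv]
  exact inv_anti₀ (abs_pos.mpr hz) him

lemma integrable_mul_div_normSq_sub_ofReal [IsFiniteMeasure ρ] (hz : z.im ≠ 0) :
    Integrable (fun t : ℝ => t * z.im / normSq (z - t)) ρ := by
  refine ((integrable_inv_sub_ofReal hz).const_mul z).im.neg.congr (.of_forall fun t => ?_)
  simp only [Pi.neg_apply, RCLike.im_to_complex, im_mul_inv_sub_ofReal, neg_neg]

lemma im_mul_cauchyTransform [IsFiniteMeasure ρ] (hz : z.im ≠ 0) :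
    (z * cauchyTransform ρ z).im = -∫ t, t * z.im / normSq (z - t) ∂ρ := by
  rw [cauchyTransform, ← integral_const_mul, ← integral_neg,
    ← RCLike.im_to_complex, ← integral_im ((integrable_inv_sub_ofReal hz).const_mul z)]
  simp only [RCLike.im_to_complex, im_mul_inv_sub_ofReal]

lemma integral_mul_div_normSq_sub_ofReal_pos [IsProbabilityMeasure ρ] (hρ : ρ (Iio 0) = 0)
    (hρ0 : ρ ≠ Measure.dirac 0) (hz : 0 < z.im) :
    0 < ∫ t, t * z.im / normSq (z - t) ∂ρ := by
  have hnonneg : 0 ≤ᵐ[ρ] fun t : ℝ => t * z.im / normSq (z - t) := by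
    filter_upwards [ae_nonneg_of_measure_Iio_eq_zero hρ] with t ht
    exact div_nonneg (mul_nonneg ht hz.le) (normSq_nonneg _)
  have hsupport : Function.support (fun t : ℝ => t * z.im / normSq (z - t)) = {0}ᶜ := by
    ext t
    have hzt : z - t ≠ 0 := fun h => hz.ne' (by simpa using congrArg im h)
    simp [hz.ne', hzt]
  rw [integral_pos_iff_support_of_nonneg_ae hnonneg
    (integrable_mul_div_normSq_sub_ofReal hz.ne'), hsupport, pos_iff_ne_zero]
  exact fun h => hρ0 (Measure.eq_dirac_of_ae_eq (ae_iff.mpr h))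

lemma im_mul_cauchyTransform_neg [IsProbabilityMeasure ρ] (hρ : ρ (Iio 0) = 0)
    (hρ0 : ρ ≠ Measure.dirac 0) (hz : 0 < z.im) :
    (z * cauchyTransform ρ z).im < 0 := by
  rw [im_mul_cauchyTransform hz.ne', neg_neg_iff_pos]
  exact integral_mul_div_normSq_sub_ofReal_pos hρ hρ0 hz

end CauchyTransform

lemma one_sub_mul_add_ne_zero {w : ℂ} (hw : w.im ≠ 0) (x : ℝ) : (1 - x) * w + x ≠ 0 := by
  intro h
  have him : (1 - x) * w.im = 0 := by simpa using congrArg im h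
  rcases mul_eq_zero.mp him with hx | hw'
  · obtain rfl : x = 1 := by linarith
    simp at h
  · exact hw hw'

lemma div_one_sub_mul_add_eq (g u x : ℂ) (hu : u - 1 ≠ 0) :
    g / ((1 - x) * u + x) = g / (u - 1) * (u / (u - 1) - x)⁻¹ := by
  have hsub : u / (u - 1) - x = ((1 - x) * u + x) / (u - 1) := by
    field_simp
    ring
  rw [hsub, inv_div, div_mul_div_cancel₀ hu]

theorem monotone_multiplicative_cauchy_transform_general
    (μ ν : Measure ℝ) [IsProbabilityMeasure ν]
    (hν : ν (Set.Iio 0) = 0) (hν0 : ν ≠ Measure.dirac 0)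
    (z : ℂ) (hz : 0 < z.im) :
    z * cauchyTransform ν z - 1 ≠ 0 ∧
    (∀ x : ℝ, 0 ≤ x → (1 - (x : ℂ)) * z * cauchyTransform ν z + (x : ℂ) ≠ 0) ∧
    ∫ x, cauchyTransform ν z / ((1 - (x : ℂ)) * z * cauchyTransform ν z + (x : ℂ)) ∂μ
      = cauchyTransform ν z / (z * cauchyTransform ν z - 1) *
          cauchyTransform μ (z * cauchyTransform ν z / (z * cauchyTransform ν z - 1)) := by
  have him : (z * cauchyTransform ν z).im ≠ 0 := (im_mul_cauchyTransform_neg hν hν0 hz).ne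
  have hsub : z * cauchyTransform ν z - 1 ≠ 0 := fun h => him (by simpa using congrArg im h)
  refine ⟨hsub, fun x _ => by simpa only [mul_assoc] using one_sub_mul_add_ne_zero him x, ?_⟩
  simp_rw [mul_assoc, div_one_sub_mul_add_eq _ _ _ hsub]
  exact integral_const_mul _ _

/-- The Cauchy-transform identity for the multiplicative monotone convolution:
for probability measures on `[0,∞)` with `ν ≠ δ₀` and `z` in the upper half-plane,
`∫ G_ν(z)/((1−x)·z·G_ν(z)+x) dμ(x) = [G_ν(z)/(z·G_ν(z)−1)] · G_μ(z·G_ν(z)/(z·G_ν(z)−1))`. -/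
theorem monotone_multiplicative_cauchy_transform
    (μ ν : Measure ℝ) [IsProbabilityMeasure μ] [IsProbabilityMeasure ν]
    (hμ : μ (Set.Iio 0) = 0) (hν : ν (Set.Iio 0) = 0) (hν0 : ν ≠ Measure.dirac 0)
    (z : ℂ) (hz : 0 < z.im) :
    z * cauchyTransform ν z - 1 ≠ 0 ∧
    (∀ x : ℝ, 0 ≤ x → (1 - (x : ℂ)) * z * cauchyTransform ν z + (x : ℂ) ≠ 0) ∧
    ∫ x, cauchyTransform ν z / ((1 - (x : ℂ)) * z * cauchyTransform ν z + (x : ℂ)) ∂μ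
      = cauchyTransform ν z / (z * cauchyTransform ν z - 1) *
          cauchyTransform μ (z * cauchyTransform ν z / (z * cauchyTransform ν z - 1)) :=
  monotone_multiplicative_cauchy_transform_general μ ν hν hν0 z hz
end

section
/- Let μ and ν be Borel probability measures on ℝ, z ∈ ℂ∖ℝ, α ∈ ℂ, ψ₁ ∈ L²(ℝ,μ) with ∫ψ₁ dμ = 0, and ψ₂ ∈ L²(ℝ,ν) with ∫ψ₂ dν = 0. Define β = [α·G_μ(z)·G_ν(z) + G_ν(z)·∫ ψ₁(x)/(z−x) dμ(x) + G_μ(z)·∫ ψ₂(y)/(z−y) dν(y)] / (G_μ(z)+G_ν(z)−z·G_μ(z)·G_ν(z)), c_x = [∫ ψ₁(x)/(z−x) dμ(x) + β·(z·G_μ(z)−1)] / G_μ(z), c_y = [∫ ψ₂(y)/(z−y) dν(y) + β·(z·G_ν(z)−1)] / G_ν(z), φ₁(x) = (ψ₁(x)+β·x−c_x)/(z−x), and φ₂(y) = (ψ₂(y)+β·y−c_y)/(z−y). Then φ₁ ∈ L²(ℝ,μ), φ₂ ∈ L²(ℝ,ν), ∫φ₁ dμ = 0 = ∫φ₂ dν,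 the functions x ↦ x·(φ₁(x)+β) and y ↦ y·(φ₂(y)+β) are μ- respectively ν-integrable with ∫ x·(φ₁(x)+β) dμ(x) = c_x and ∫ y·(φ₂(y)+β) dν(y) = c_y, and moreover z·β − c_x − c_y = α, z·φ₁(x) − x·(φ₁(x)+β) + c_x = ψ₁(x) for μ-a.e. x, and z·φ₂(y) − y·(φ₂(y)+β) + c_y = ψ₂(y) for ν-a.e. y. (That is, (β,φ₁,φ₂) is the image of (α,ψ₁,ψ₂) under the explicit bounded inverse of z − N_x − N_y in the boolean model.) -/
/-!
The kernel `t ↦ (z - t)⁻¹` is bounded by `|Im z|⁻¹`, so `φᵢ` is `ψᵢ + const` times a bounded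
function, minus a constant, hence in `L²`. The constant `c` is exactly the one making `∫ φ = 0`,
and integrating the pointwise identity `z φ - t (φ + β) + c = ψ` against a centred `ψ` then gives
`∫ t (φ + β) = c`. The scalar equation `z β - c_x - c_y = α` is field algebra once the
denominators are nonzero: `G_ρ(z) ≠ 0` because `Im G_ρ(z) = -Im z ∫ |z - t|⁻² dρ`, and
`G_μ + G_ν - z G_μ G_ν = 0` would force `1/G_μ + 1/G_ν = z`, which is impossible since Jensen's
inequality `|G_ρ|² ≤ ∫ |z - t|⁻² dρ` makes each `Im (1/G_ρ)` at least as large as `Im z` in the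
direction of `Im z`.
-/

open MeasureTheory

section Kernel

variable {z : ℂ}

lemma Complex.sub_ofReal_ne_zero (hz : z.im ≠ 0) (t : ℝ) : z - t ≠ 0 :=
  fun h => hz (by simpa using congrArg Complex.im h)

lemma Complex.norm_inv_sub_ofReal_le (hz : z.im ≠ 0) (t : ℝ) : ‖(z - t)⁻¹‖ ≤ |z.im|⁻¹ := by
  rw [norm_inv]
  exact inv_anti₀ (abs_pos.mpr hz) (by simpa using Complex.abs_im_le_norm (z - t))

lemma Complex.im_inv_sub_ofReal (t : ℝ) : ((z - t)⁻¹).im = -z.im * ‖(z - t)⁻¹‖ ^ 2 := by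
  rw [Complex.inv_im, norm_inv, inv_pow, Complex.sq_norm]
  simp [div_eq_mul_inv]

lemma memLp_inv_sub_ofReal (ρ : Measure ℝ) [IsFiniteMeasure ρ] (hz : z.im ≠ 0) (p : ENNReal) :
    MemLp (fun t : ℝ => (z - t)⁻¹) p ρ :=
  MemLp.of_bound (by fun_prop) _ (.of_forall (Complex.norm_inv_sub_ofReal_le hz))

end Kernel

section CauchyTransform

variable {ρ : Measure ℝ} {z : ℂ}

lemma im_cauchyTransform [IsFiniteMeasure ρ] (hz : z.im ≠ 0) :
    (cauchyTransform ρ z).im = -z.im * ∫ t, ‖(z - t)⁻¹‖ ^ 2 ∂ρ := by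
  have hcomm := integral_im ((memLp_inv_sub_ofReal ρ hz 1).integrable le_rfl) (μ := ρ)
  rw [cauchyTransform, ← RCLike.im_to_complex, ← hcomm, ← integral_const_mul]
  exact integral_congr_ae (.of_forall Complex.im_inv_sub_ofReal)

lemma sq_norm_cauchyTransform_le [IsProbabilityMeasure ρ] (hz : z.im ≠ 0) :
    ‖cauchyTransform ρ z‖ ^ 2 ≤ ∫ t, ‖(z - t)⁻¹‖ ^ 2 ∂ρ :=
  ((convexOn_norm convex_univ).pow (fun _ _ => norm_nonneg _) 2).map_integral_le
    (by fun_prop) isClosed_univ (.of_forall fun _ => Set.mem_univ _)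
    ((memLp_inv_sub_ofReal ρ hz 1).integrable le_rfl)
    ((memLp_inv_sub_ofReal ρ hz 2).integrable_norm_pow two_ne_zero)

lemma integral_sq_norm_inv_sub_ofReal_pos [IsFiniteMeasure ρ] [NeZero ρ] (hz : z.im ≠ 0) :
    0 < ∫ t, ‖(z - t)⁻¹‖ ^ 2 ∂ρ := by
  have hpos (t : ℝ) : 0 < ‖(z - t)⁻¹‖ ^ 2 :=
    pow_pos (norm_pos_iff.mpr (inv_ne_zero (Complex.sub_ofReal_ne_zero hz t))) 2
  rw [integral_pos_iff_support_of_nonneg (fun t => (hpos t).le)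
    ((memLp_inv_sub_ofReal ρ hz 2).integrable_norm_pow two_ne_zero),
    Function.support_eq_univ fun t => (hpos t).ne']
  simp [NeZero.ne ρ]

lemma cauchyTransform_ne_zero [IsFiniteMeasure ρ] [NeZero ρ] (hz : z.im ≠ 0) :
    cauchyTransform ρ z ≠ 0 := by
  intro h
  have him := im_cauchyTransform (ρ := ρ) hz
  rw [h, Complex.zero_im, eq_comm] at him
  exact mul_ne_zero (neg_ne_zero.mpr hz) (integral_sq_norm_inv_sub_ofReal_pos hz).ne' him

lemma sq_im_le_im_mul_im_inv_cauchyTransform [IsProbabilityMeasure ρ] (hz : z.im ≠ 0) :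
    z.im ^ 2 ≤ z.im * (cauchyTransform ρ z)⁻¹.im := by
  have hG : 0 < ‖cauchyTransform ρ z‖ ^ 2 := by
    have := cauchyTransform_ne_zero (ρ := ρ) hz
    positivity
  have hS := sq_norm_cauchyTransform_le (ρ := ρ) hz
  rw [Complex.inv_im, im_cauchyTransform hz, ← Complex.sq_norm]
  calc z.im ^ 2 ≤ z.im ^ 2 * ((∫ t, ‖(z - t)⁻¹‖ ^ 2 ∂ρ) / ‖cauchyTransform ρ z‖ ^ 2) :=
        le_mul_of_one_le_right (sq_nonneg _) ((one_le_div hG).mpr hS)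
    _ = _ := by ring

lemma cauchyTransform_add_sub_mul_ne_zero {μ ν : Measure ℝ} [IsProbabilityMeasure μ]
    [IsProbabilityMeasure ν] (hz : z.im ≠ 0) :
    cauchyTransform μ z + cauchyTransform ν z
      - z * cauchyTransform μ z * cauchyTransform ν z ≠ 0 := by
  intro h
  have hμ := cauchyTransform_ne_zero (ρ := μ) hz
  have hν := cauchyTransform_ne_zero (ρ := ν) hz
  have hsum : (cauchyTransform μ z)⁻¹ + (cauchyTransform ν z)⁻¹ = z := by
    field_simp
    linear_combination h
  have him := congrArg (z.im * Complex.im ·) hsum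
  simp only [Complex.add_im, mul_add] at him
  nlinarith [sq_im_le_im_mul_im_inv_cauchyTransform (ρ := μ) hz,
    sq_im_le_im_mul_im_inv_cauchyTransform (ρ := ν) hz, sq_pos_of_ne_zero hz]

end CauchyTransform

namespace BooleanResolvent

variable {ρ : Measure ℝ} {z : ℂ} {ψ : ℝ → ℂ} {β c : ℂ}

lemma component_eq (hz : z.im ≠ 0) :
    (fun t : ℝ => (ψ t + β * t - c) / (z - t))
      = fun t : ℝ => (ψ t + (β * z - c)) * (z - t)⁻¹ - β := by
  funext t
  field_simp [Complex.sub_ofReal_ne_zero hz t]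
  ring

lemma memLp_component [IsFiniteMeasure ρ] (hz : z.im ≠ 0) {p : ENNReal} (hψ : MemLp ψ p ρ) :
    MemLp (fun t : ℝ => (ψ t + β * t - c) / (z - t)) p ρ := by
  rw [component_eq hz]
  exact ((memLp_inv_sub_ofReal ρ hz ⊤).mul' (hψ.add (memLp_const _))).sub (memLp_const β)

lemma integral_component [IsProbabilityMeasure ρ] (hz : z.im ≠ 0) (hψ : Integrable ψ ρ) :
    ∫ t, (ψ t + β * t - c) / (z - t) ∂ρ
      = (∫ t, ψ t / (z - t) ∂ρ) + (β * z - c) * cauchyTransform ρ z - β := by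
  have hk : Integrable (fun t : ℝ => (z - t)⁻¹) ρ :=
    (memLp_inv_sub_ofReal ρ hz 1).integrable le_rfl
  have hψk : Integrable (fun t => ψ t * (z - t)⁻¹) ρ :=
    hψ.mul_bdd (by fun_prop) (.of_forall (Complex.norm_inv_sub_ofReal_le hz))
  have hsum : Integrable (fun t => ψ t * (z - t)⁻¹ + (β * z - c) * (z - t)⁻¹) ρ :=
    hψk.add (hk.const_mul _)
  rw [component_eq hz]
  simp_rw [add_mul]
  rw [integral_sub hsum (integrable_const β),
    integral_add hψk (hk.const_mul _), integral_const_mul]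
  simp [cauchyTransform, div_eq_mul_inv]

lemma component_resolvent_identity (hz : z.im ≠ 0) (t : ℝ) :
    z * ((ψ t + β * t - c) / (z - t)) - t * ((ψ t + β * t - c) / (z - t) + β) + c = ψ t := by
  field_simp [Complex.sub_ofReal_ne_zero hz t]
  ring

lemma component_spec [IsProbabilityMeasure ρ] (hz : z.im ≠ 0) (hψ : MemLp ψ 2 ρ)
    (hψ0 : ∫ t, ψ t ∂ρ = 0) {φ : ℝ → ℂ}
    (hc : c = ((∫ t, ψ t / (z - t) ∂ρ) + β * (z * cauchyTransform ρ z - 1)) /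
        cauchyTransform ρ z)
    (hφ : φ = fun t : ℝ => (ψ t + β * t - c) / (z - t)) :
    MemLp φ 2 ρ ∧ ∫ t, φ t ∂ρ = 0 ∧ Integrable (fun t : ℝ => (t : ℂ) * (φ t + β)) ρ ∧
      ∫ t, (t : ℂ) * (φ t + β) ∂ρ = c ∧ ∀ t : ℝ, z * φ t - t * (φ t + β) + c = ψ t := by
  subst hφ
  have hψi := hψ.integrable one_le_two
  have hmem := memLp_component (β := β) (c := c) hz hψ
  have hφi := hmem.integrable one_le_two
  have hmean : ∫ t, (ψ t + β * t - c) / (z - t) ∂ρ = 0 := by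
    rw [integral_component hz hψi, hc]
    field_simp [cauchyTransform_ne_zero (ρ := ρ) hz]
    ring
  have hid := component_resolvent_identity (ψ := ψ) (β := β) (c := c) hz
  have hmul : (fun t : ℝ => (t : ℂ) * ((ψ t + β * t - c) / (z - t) + β))
      = fun t => z * ((ψ t + β * t - c) / (z - t)) + c - ψ t :=
    funext fun t => by linear_combination -hid t
  have hlin : Integrable (fun t => z * ((ψ t + β * t - c) / (z - t)) + c) ρ :=
    (hφi.const_mul z).add (integrable_const c)
  refine ⟨hmem, hmean, hmul ▸ hlin.sub hψi, ?_, hid⟩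
  rw [hmul, integral_sub hlin hψi, integral_add (hφi.const_mul z) (integrable_const c),
    integral_const_mul, hmean, hψ0]
  simp

lemma scalar_component_eq {K : Type*} [Field K] {z α β cx cy Gμ Gν Iμ Iν : K} (hμ : Gμ ≠ 0) (hν : Gν ≠ 0)
    (hD : Gμ + Gν - z * Gμ * Gν ≠ 0)
    (hβ : β = (α * Gμ * Gν + Gν * Iμ + Gμ * Iν) / (Gμ + Gν - z * Gμ * Gν))
    (hcx : cx = (Iμ + β * (z * Gμ - 1)) / Gμ) (hcy : cy = (Iν + β * (z * Gν - 1)) / Gν) :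
    z * β - cx - cy = α := by
  rw [hcx, hcy, hβ]
  field_simp
  ring

end BooleanResolvent

/-- The triple `(β, φ₁, φ₂)` defined by the displayed formulas is the image of `(α, ψ₁, ψ₂)`
under the explicit bounded inverse of `z − N_x − N_y` in the boolean model. -/
theorem boolean_model_additive_resolvent
    (μ ν : Measure ℝ) [IsProbabilityMeasure μ] [IsProbabilityMeasure ν]
    (z : ℂ) (hz : z.im ≠ 0) (α : ℂ) (ψ₁ ψ₂ : ℝ → ℂ)
    (hψ₁ : MemLp ψ₁ 2 μ) (hψ₁0 : (∫ x, ψ₁ x ∂μ) = 0)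
    (hψ₂ : MemLp ψ₂ 2 ν) (hψ₂0 : (∫ y, ψ₂ y ∂ν) = 0)
    (β cx cy : ℂ) (φ₁ φ₂ : ℝ → ℂ)
    (hβ : β = (α * cauchyTransform μ z * cauchyTransform ν z
          + cauchyTransform ν z * (∫ x, ψ₁ x / (z - (x : ℂ)) ∂μ)
          + cauchyTransform μ z * (∫ y, ψ₂ y / (z - (y : ℂ)) ∂ν)) /
        (cauchyTransform μ z + cauchyTransform ν z
          - z * cauchyTransform μ z * cauchyTransform ν z))
    (hcx : cx = ((∫ x, ψ₁ x / (z - (x : ℂ)) ∂μ) + β * (z * cauchyTransform μ z - 1)) /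
        cauchyTransform μ z)
    (hcy : cy = ((∫ y, ψ₂ y / (z - (y : ℂ)) ∂ν) + β * (z * cauchyTransform ν z - 1)) /
        cauchyTransform ν z)
    (hφ₁ : φ₁ = fun x : ℝ => (ψ₁ x + β * (x : ℂ) - cx) / (z - (x : ℂ)))
    (hφ₂ : φ₂ = fun y : ℝ => (ψ₂ y + β * (y : ℂ) - cy) / (z - (y : ℂ))) :
    MemLp φ₁ 2 μ ∧ MemLp φ₂ 2 ν ∧
    (∫ x, φ₁ x ∂μ) = 0 ∧ (∫ y, φ₂ y ∂ν) = 0 ∧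
    Integrable (fun x : ℝ => (x : ℂ) * (φ₁ x + β)) μ ∧
    Integrable (fun y : ℝ => (y : ℂ) * (φ₂ y + β)) ν ∧
    (∫ x, (x : ℂ) * (φ₁ x + β) ∂μ) = cx ∧
    (∫ y, (y : ℂ) * (φ₂ y + β) ∂ν) = cy ∧
    z * β - cx - cy = α ∧
    (∀ᵐ x ∂μ, z * φ₁ x - (x : ℂ) * (φ₁ x + β) + cx = ψ₁ x) ∧
    (∀ᵐ y ∂ν, z * φ₂ y - (y : ℂ) * (φ₂ y + β) + cy = ψ₂ y) := by
  obtain ⟨hL2₁, hmean₁, hint₁, hmom₁, hid₁⟩ :=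
    BooleanResolvent.component_spec hz hψ₁ hψ₁0 hcx hφ₁
  obtain ⟨hL2₂, hmean₂, hint₂, hmom₂, hid₂⟩ :=
    BooleanResolvent.component_spec hz hψ₂ hψ₂0 hcy hφ₂
  have hscalar : z * β - cx - cy = α :=
    BooleanResolvent.scalar_component_eq (cauchyTransform_ne_zero hz) (cauchyTransform_ne_zero hz)
      (cauchyTransform_add_sub_mul_ne_zero hz) hβ hcx hcy
  exact ⟨hL2₁, hL2₂, hmean₁, hmean₂, hint₁, hint₂, hmom₁, hmom₂, hscalar,
    .of_forall hid₁, .of_forall hid₂⟩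
end
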